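/- arXiv:2104.02944 — 11 statements merged into one kernel-verified Lean document; each statement's English description precedes it below -/
import Mathlib

section
/- Let S be an E-Fountain semigroup with distinguished set of idempotents E. Then the condition (for all e,f in E, ef = e if and only if fe = e) implies that for every a in S the set a_E = {e in E : ae = a} of right identities of a from E contains a minimum element with respect to the natural partial order on idempotents. -/
/-- An E-Fountain semigroup: every L~-class and every R~-class contains an
idempotent of E.  The condition `ef = e ↔ fe = e` on E implies every set
`a_E = {e ∈ E | ae = a}` of right identities has a minimum element with
respect to the natural partial order on idempotents (`e ≤ f ↔ ef = fe = e`). -/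
theorem stmt_0 {S : Type*} [Semigroup S] (E : Set S)
    (hidem : ∀ e ∈ E, e * e = e)
    (hL : ∀ a : S, ∃ e ∈ E, ∀ f ∈ E, (a * f = a ↔ e * f = e))
    (hR : ∀ a : S, ∃ e ∈ E, ∀ f ∈ E, (f * a = a ↔ f * e = e))
    (hred : ∀ e ∈ E, ∀ f ∈ E, (e * f = e ↔ f * e = e)) :
    ∀ a : S, ∃ e ∈ E, a * e = a ∧
      ∀ f ∈ E, a * f = a → (e * f = e ∧ f * e = e) := by
  intro a
  obtain ⟨e, heE, he⟩ := hL a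
  refine ⟨e, heE, (he e heE).mpr (hidem e heE), fun f hf haf => ?_⟩
  have hef : e * f = e := (he f hf).mp haf
  exact ⟨hef, (hred e heE f hf).mp hef⟩
end

section
/- Let S be a reduced E-Fountain semigroup satisfying the congruence condition. If the right ample condition holds in S (ea = a·(ea)* for all a in S, e in E), then E is a subband of S, i.e., E is closed under multiplication. -/
/-- A reduced E-Fountain semigroup: a semigroup `S` with a distinguished set of
idempotents `E` such that `ef = e ↔ fe = e` on `E`, equipped with unary
operations `star` (the minimum right identity of `a` from `E`) and `plus`
(the minimum left identity of `a` from `E`), where the order on idempotents is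
`e ≤ f ↔ ef = fe = e`. -/
structure RedEF (S : Type*) [Semigroup S] where
  E : Set S
  idem : ∀ e ∈ E, e * e = e
  reduced : ∀ e ∈ E, ∀ f ∈ E, (e * f = e ↔ f * e = e)
  star : S → S
  plus : S → S
  star_mem : ∀ a : S, star a ∈ E
  plus_mem : ∀ a : S, plus a ∈ E
  mul_star : ∀ a : S, a * star a = a
  plus_mul : ∀ a : S, plus a * a = a
  star_min : ∀ a : S, ∀ e ∈ E, a * e = a → (star a * e = star a ∧ e * star a = star a)
  plus_min : ∀ a : S, ∀ e ∈ E, e * a = a → (e * plus a = plus a ∧ plus a * e = plus a)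

/-- Under the congruence condition, the right ample identity `ea = a(ea)^*`
implies `E` is a subband (closed under multiplication). -/
theorem stmt_3 {S : Type*} [Semigroup S] (F : RedEF S)
    (hcs : ∀ a b : S, F.star (a * b) = F.star (F.star a * b))
    (hcp : ∀ a b : S, F.plus (a * b) = F.plus (a * F.plus b))
    (hample : ∀ a : S, ∀ e ∈ F.E, e * a = a * F.star (e * a)) :
    ∀ e ∈ F.E, ∀ f ∈ F.E, e * f ∈ F.E := by
  intro e he f hf
  have h1 : e * f = f * F.star (e * f) := hample f e he
  have h2 : (e * f) * f = e * f := by rw [mul_assoc, F.idem f hf]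
  have h3 : f * F.star (e * f) = F.star (e * f) := (F.star_min (e * f) f hf h2).2
  rw [h1, h3]
  exact F.star_mem _
end

section
/- Let S be a reduced E-Fountain semigroup. If E is a subband of S (closed under multiplication), then E is a subsemilattice, i.e., ef = fe for all e, f in E. -/
/-- In a reduced E-Fountain semigroup, if `E` is a subband then `E` is a
subsemilattice, i.e. commutative. -/
theorem stmt_4 {S : Type*} [Semigroup S] (F : RedEF S)
    (hband : ∀ e ∈ F.E, ∀ f ∈ F.E, e * f ∈ F.E) :
    ∀ e ∈ F.E, ∀ f ∈ F.E, e * f = f * e := by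
  intro e he f hf
  have hx : e * f ∈ F.E := hband e he f hf
  have hy : f * e ∈ F.E := hband f hf e he
  have hee := F.idem e he
  have hff := F.idem f hf
  have he2 : ∀ x : S, e * (e * x) = e * x := fun x => by rw [← mul_assoc, hee]
  have hf2 : ∀ x : S, f * (f * x) = f * x := fun x => by rw [← mul_assoc, hff]
  have A : e * (f * (e * f)) = e * f := by rw [← mul_assoc]; exact F.idem _ hx
  have A' : f * (e * (f * e)) = f * e := by rw [← mul_assoc]; exact F.idem _ hy
  -- claim 1 : (f*e)*(e*f) = e*f
  have h1 : (e * f) * ((f * e) * (e * f)) = e * f := by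
    simp [mul_assoc, he2, hf2, A]
  have h1' : ((f * e) * (e * f)) * (e * f) = e * f :=
    (F.reduced _ hx _ (hband _ hy _ hx)).mp h1
  have h1'' : ((f * e) * (e * f)) * (e * f) = (f * e) * (e * f) := by
    simp [mul_assoc, he2, A]
  have hyx : (f * e) * (e * f) = e * f := by rw [← h1'', h1']
  -- claim 2 : (e*f)*(f*e) = f*e
  have h2 : (f * e) * ((e * f) * (f * e)) = f * e := by
    simp [mul_assoc, he2, hf2, A']
  have h2' : ((e * f) * (f * e)) * (f * e) = f * e :=
    (F.reduced _ hy _ (hband _ hx _ hy)).mp h2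
  have h2'' : ((e * f) * (f * e)) * (f * e) = (e * f) * (f * e) := by
    simp [mul_assoc, hf2, A']
  have hxy : (e * f) * (f * e) = f * e := by rw [← h2'', h2']
  -- combine via reducedness
  have := (F.reduced _ hy _ hx).mpr hxy
  rw [hyx] at this
  exact this
end

section
/- Let S be a reduced E-Fountain semigroup satisfying the congruence condition with E a subsemilattice. Then the relations ⊴_l and ≤_l coincide, where a ≤_l b iff a* ≤ b* and a = b·a*. -/
/-- With `E` a subsemilattice and the congruence condition, the relations
`⊴_l` and `≤_l` coincide, where `a ≤_l b ↔ (a^* ≤ b^* and a = b a^*)`. -/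
theorem stmt_6 {S : Type*} [Semigroup S] (F : RedEF S)
    (hcs : ∀ a b : S, F.star (a * b) = F.star (F.star a * b))
    (hcp : ∀ a b : S, F.plus (a * b) = F.plus (a * F.plus b))
    (hclosed : ∀ e ∈ F.E, ∀ f ∈ F.E, e * f ∈ F.E)
    (hcomm : ∀ e ∈ F.E, ∀ f ∈ F.E, e * f = f * e) :
    ∀ a b : S, (∃ e ∈ F.E, a = b * e) ↔
      ((F.star a * F.star b = F.star a ∧ F.star b * F.star a = F.star a) ∧
        a = b * F.star a) := by
  have hse : ∀ e ∈ F.E, F.star e = e := by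
    intro e he
    have h := F.star_min e e he (F.idem e he)
    have h2 := F.mul_star e
    rw [h.2] at h2
    exact h2
  intro a b
  constructor
  · rintro ⟨e, he, rfl⟩
    have hae : (b * e) * e = b * e := by rw [mul_assoc, F.idem e he]
    obtain ⟨h1, h2⟩ := F.star_min (b * e) e he hae
    have hba : b * e = b * F.star (b * e) := by
      conv_lhs => rw [← F.mul_star (b * e)]
      rw [mul_assoc, h2]
    have key : F.star (b * e) = F.star b * F.star (b * e) :=
      ((congrArg F.star hba).trans (hcs b (F.star (b * e)))).trans
        (hse _ (hclosed _ (F.star_mem b) _ (F.star_mem (b * e))))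
    exact ⟨⟨(hcomm _ (F.star_mem (b*e)) _ (F.star_mem b)).trans key.symm, key.symm⟩, hba⟩
  · rintro ⟨_, hba⟩
    exact ⟨F.star a, F.star_mem a, hba⟩
end

section
/- Let S be a reduced E-Fountain semigroup satisfying the congruence condition. If the right ample identity ea = a(ea)* holds for all a in S and e in E, then the generalized right ample identity (e·(a·(eaf)*)+)* = (a·(eaf)*)+ holds for all a in S and e, f in E. -/
/-- Star of an idempotent in `E` is itself. -/
lemma RedEF.star_idem {S : Type*} [Semigroup S] (F : RedEF S) {e : S} (he : e ∈ F.E) :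
    F.star e = e := by
  have h := (F.star_min e e he (F.idem e he)).2
  -- h : e * star e = star e ; mul_star : e * star e = e
  rw [F.mul_star e] at h
  exact h.symm

/-- Under the congruence condition, the right ample identity implies the
generalized right ample identity `(e (a (eaf)^*)^+)^* = (a (eaf)^*)^+`. -/
theorem stmt_7 {S : Type*} [Semigroup S] (F : RedEF S)
    (hcs : ∀ a b : S, F.star (a * b) = F.star (F.star a * b))
    (hcp : ∀ a b : S, F.plus (a * b) = F.plus (a * F.plus b))
    (hample : ∀ a : S, ∀ e ∈ F.E, e * a = a * F.star (e * a)) :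
    ∀ a : S, ∀ e ∈ F.E, ∀ f ∈ F.E,
      F.star (e * F.plus (a * F.star (e * a * f))) =
        F.plus (a * F.star (e * a * f)) := by
  intro a e he f hf
  set g := F.star (e * a) with hg
  have hgE : g ∈ F.E := F.star_mem (e * a)
  -- s = (eaf)* = (g f)*
  have hs : F.star (e * a * f) = F.star (g * f) := by
    rw [hcs (e * a) f, hg]
  set s := F.star (e * a * f) with hsdef
  have hsE : s ∈ F.E := F.star_mem (e * a * f)
  -- f * s = s
  have hfs : f * s = s := by
    have htf : (g * f) * f = g * f := by rw [mul_assoc, F.idem f hf]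
    have := (F.star_min (g * f) f hf htf).2
    rw [← hs] at this
    exact this
  -- g * s = g * f
  have hgsgf : g * s = g * f := by
    conv_lhs => rw [← hfs, ← mul_assoc]
    rw [hs]
    exact F.mul_star (g * f)
  -- g * s = s  (Claim A)
  have hgs : g * s = s := by
    have hamp := hample s g hgE
    rw [hamp, hgsgf, ← hs]
    exact F.idem s hsE
  -- e * (a * s) = a * s
  have hex : e * (a * s) = a * s := by
    have h1 : e * a = a * g := hample a e he
    rw [← mul_assoc, h1, mul_assoc, hgs]
  -- conclude
  have hp := (F.plus_min (a * s) e he hex).1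
  rw [hp]
  exact F.star_idem (F.plus_mem (a * s))
end

section
/- Let S be a reduced E-Fountain semigroup satisfying the congruence condition. The following are equivalent: (1) the generalized right ample identity (e(a(eaf)*)+)* = (a(eaf)*)+ holds for all a in S, e, f in E; (2) for all a, c in S and e in E, c ⊴_l ea implies (e(ac*)+)* = (ac*)+; (3) for all a, b, c in S, c ⊴_l ba implies (b(ac*)+)* = (ac*)+. -/
/-- Equivalent formulations of the generalized right ample condition. -/
theorem stmt_8 {S : Type*} [Semigroup S] (F : RedEF S)
    (hcs : ∀ a b : S, F.star (a * b) = F.star (F.star a * b))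
    (hcp : ∀ a b : S, F.plus (a * b) = F.plus (a * F.plus b)) :
    ((∀ a : S, ∀ e ∈ F.E, ∀ f ∈ F.E,
        F.star (e * F.plus (a * F.star (e * a * f))) =
          F.plus (a * F.star (e * a * f))) ↔
      (∀ a c : S, ∀ e ∈ F.E, (∃ g ∈ F.E, c = e * a * g) →
        F.star (e * F.plus (a * F.star c)) = F.plus (a * F.star c))) ∧
    ((∀ a c : S, ∀ e ∈ F.E, (∃ g ∈ F.E, c = e * a * g) →
        F.star (e * F.plus (a * F.star c)) = F.plus (a * F.star c)) ↔
      (∀ a b c : S, (∃ g ∈ F.E, c = b * a * g) →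
        F.star (b * F.plus (a * F.star c)) = F.plus (a * F.star c))) := by
  constructor
  · constructor
    · rintro h a c e he ⟨g, hg, rfl⟩
      exact h a e he g hg
    · intro h a e he f hf
      exact h a (e * a * f) e he ⟨f, hf, rfl⟩
  · constructor
    · rintro h a b c ⟨g, hg, rfl⟩
      have hc : F.star (b * a * g) = F.star (F.star b * a * g) := by
        rw [mul_assoc, hcs, ← mul_assoc]
      have key := h a (F.star b * a * g) (F.star b) (F.star_mem b)
        ⟨g, hg, rfl⟩
      rw [← hc] at key
      rw [hcs]
      exact key
    · intro h a c e he hc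
      exact h a e c hc
end

section
/- Let S be a reduced E-Fountain semigroup satisfying the congruence condition. Suppose for all a, b, c in S, c ⊴_l ba implies (b(ac*)+)* = (ac*)+. Then for every c ⊴_l ba, setting c' = ac* and c'' = b(ac*)+, we have c' ⊴_l a, c'' ⊴_l b, (c'')* = (c')+, and c''·c' = c. Moreover (c', c'') is the unique such pair: if d' ⊴_l a, d'' ⊴_l b, (d'')* = (d')+, and d''d' = c with (d')* = c*, then d' = c' and d'' = c''. -/
private lemma RedEF.key {S : Type*} [Semigroup S] (F : RedEF S) {x y e : S}
    (he : e ∈ F.E) (h : x = y * e) : y * F.star x = x := by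
  have hxe : x * e = x := by rw [h, mul_assoc, F.idem e he]
  obtain ⟨_, h2⟩ := F.star_min x e he hxe
  rw [← h2, ← mul_assoc, ← h, F.mul_star]

/-- Under condition (3) of the generalized right ample condition, every
`c ⊴_l ba` factors uniquely as `c = c'' c'` with `c' = a c^* ⊴_l a`,
`c'' = b (a c^*)^+ ⊴_l b` and `(c'')^* = (c')^+`. -/
theorem stmt_9 {S : Type*} [Semigroup S] (F : RedEF S)
    (hcs : ∀ a b : S, F.star (a * b) = F.star (F.star a * b))
    (hcp : ∀ a b : S, F.plus (a * b) = F.plus (a * F.plus b))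
    (hgen : ∀ a b c : S, (∃ g ∈ F.E, c = b * a * g) →
      F.star (b * F.plus (a * F.star c)) = F.plus (a * F.star c)) :
    ∀ a b c : S, (∃ e ∈ F.E, c = b * a * e) →
      (∃ e ∈ F.E, a * F.star c = a * e) ∧
      (∃ e ∈ F.E, b * F.plus (a * F.star c) = b * e) ∧
      F.star (b * F.plus (a * F.star c)) = F.plus (a * F.star c) ∧
      (b * F.plus (a * F.star c)) * (a * F.star c) = c ∧
      (∀ d' d'' : S, (∃ e ∈ F.E, d' = a * e) → (∃ e ∈ F.E, d'' = b * e) →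
        F.star d'' = F.plus d' → d'' * d' = c → F.star d' = F.star c →
        d' = a * F.star c ∧ d'' = b * F.plus (a * F.star c)) := by
  rintro a b c ⟨e, he, hc⟩
  have h1 : (b * a) * F.star c = c := F.key he hc
  refine ⟨⟨F.star c, F.star_mem c, rfl⟩, ⟨F.plus (a * F.star c), F.plus_mem _, rfl⟩,
    hgen a b c ⟨e, he, hc⟩, ?_, ?_⟩
  · rw [mul_assoc, F.plus_mul (a * F.star c), ← mul_assoc, h1]
  · rintro d' d'' ⟨e₁, he₁, hd'⟩ ⟨e₂, he₂, hd''⟩ hsp hmul hstar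
    have hd'2 : a * F.star d' = d' := F.key he₁ hd'
    have hd''2 : b * F.star d'' = d'' := F.key he₂ hd''
    have h3 : d' = a * F.star c := by rw [← hstar, hd'2]
    refine ⟨h3, ?_⟩
    rw [← hd''2, hsp, h3]
end

section
/- The square rectangular band S on [n]×[n] with E the diagonal satisfies the generalized right ample identity: for all a in S and e, f in E, (e(a(eaf)*)+)* = (a(eaf)*)+. Moreover, for n ≥ 2, S does not satisfy the right ample identity ea = a(ea)*. -/
/-- Multiplication of the "square" rectangular band on `[n] × [n]`. -/
def rbMul {n : ℕ} (a b : Fin n × Fin n) : Fin n × Fin n := (a.1, b.2)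

/-- The diagonal set of idempotents. -/
def rbE (n : ℕ) : Set (Fin n × Fin n) := {p | p.1 = p.2}

/-- `(i,j)^* = (j,j)`, the unique right identity of `(i,j)` from `E`. -/
def rbStar {n : ℕ} (a : Fin n × Fin n) : Fin n × Fin n := (a.2, a.2)

/-- `(i,j)^+ = (i,i)`, the unique left identity of `(i,j)` from `E`. -/
def rbPlus {n : ℕ} (a : Fin n × Fin n) : Fin n × Fin n := (a.1, a.1)

/-- The square rectangular band satisfies the generalized right ample identity
`(e (a (eaf)^*)^+)^* = (a (eaf)^*)^+`, but for `n ≥ 2` it does not satisfy the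
right ample identity `ea = a (ea)^*`. -/
theorem stmt_13 (n : ℕ) :
    (∀ a : Fin n × Fin n, ∀ e ∈ rbE n, ∀ f ∈ rbE n,
      rbStar (rbMul e (rbPlus (rbMul a (rbStar (rbMul (rbMul e a) f))))) =
        rbPlus (rbMul a (rbStar (rbMul (rbMul e a) f)))) ∧
    (2 ≤ n → ¬ ∀ a : Fin n × Fin n, ∀ e ∈ rbE n,
      rbMul e a = rbMul a (rbStar (rbMul e a))) := by
  constructor
  · intro a e _ f _
    simp [rbMul, rbStar, rbPlus]
  · intro hn h
    have := h ((⟨0, by omega⟩ : Fin n), ⟨0, by omega⟩) ((⟨1, by omega⟩ : Fin n), ⟨1, by omega⟩) rfl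
    simp [rbMul, rbStar, Prod.ext_iff, Fin.ext_iff] at this
end

section
/- Let f be in the Catalan monoid CT_{n+1} and Z ⊆ [n], with e_Z the idempotent of CT_{n+1} defined by e_Z(i) = min{z ∈ Z ∪ {n+1} : i ≤ z}. Then (f∘e_Z)* = e_Z if and only if Z is a partial cross section of f, i.e., n+1 ∉ f(Z) and the restriction of f to Z is injective. -/
/-- Membership in the Catalan monoid: `f` is order-preserving and
order-increasing on `Fin m`. -/
def IsCT {m : ℕ} (f : Fin m → Fin m) : Prop := Monotone f ∧ ∀ i, i ≤ f i

/-- The idempotent `e_Z` of the Catalan monoid associated with `Z ⊆ [n]`: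
`e_Z i = min {z ∈ Z ∪ {n+1} | i ≤ z}`. -/
def eZ (n : ℕ) (Z : Finset (Fin (n + 1))) (i : Fin (n + 1)) : Fin (n + 1) :=
  ((insert (Fin.last n) Z).filter (fun z => i ≤ z)).min'
    ⟨Fin.last n, by simp [Fin.le_last]⟩

lemma eZ_mem (n : ℕ) (Z : Finset (Fin (n+1))) (i : Fin (n+1)) :
    eZ n Z i ∈ insert (Fin.last n) Z := by
  have := Finset.min'_mem ((insert (Fin.last n) Z).filter (fun z => i ≤ z))
    ⟨Fin.last n, by simp [Fin.le_last]⟩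
  exact (Finset.mem_filter.mp this).1

lemma le_eZ (n : ℕ) (Z : Finset (Fin (n+1))) (i : Fin (n+1)) :
    i ≤ eZ n Z i := by
  have := Finset.min'_mem ((insert (Fin.last n) Z).filter (fun z => i ≤ z))
    ⟨Fin.last n, by simp [Fin.le_last]⟩
  exact (Finset.mem_filter.mp this).2

lemma eZ_fix (n : ℕ) (Z : Finset (Fin (n+1))) {z : Fin (n+1)}
    (hz : z ∈ insert (Fin.last n) Z) : eZ n Z z = z := by
  refine le_antisymm ?_ (le_eZ n Z z)
  exact Finset.min'_le _ z (Finset.mem_filter.mpr ⟨hz, le_refl z⟩)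

/-- `(f ∘ e_Z)^* = e_Z` (i.e. `ker (f ∘ e_Z) = ker e_Z`) iff `Z` is a partial
cross section of `f`: `n+1 ∉ f(Z)` and `f` restricted to `Z` is injective. -/
theorem stmt_15 (n : ℕ) (f : Fin (n + 1) → Fin (n + 1)) (hf : IsCT f)
    (Z : Finset (Fin (n + 1))) (hZ : Fin.last n ∉ Z) :
    (∀ x y, f (eZ n Z x) = f (eZ n Z y) ↔ eZ n Z x = eZ n Z y) ↔
      ((∀ z ∈ Z, f z ≠ Fin.last n) ∧ Set.InjOn f ↑Z) := by
  have hlast : f (Fin.last n) = Fin.last n := le_antisymm (Fin.le_last _) (hf.2 _)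
  constructor
  · intro h
    constructor
    · intro z hz hcontra
      have h1 : eZ n Z z = z := eZ_fix n Z (Finset.mem_insert_of_mem hz)
      have h2 : eZ n Z (Fin.last n) = Fin.last n := eZ_fix n Z (Finset.mem_insert_self _ _)
      have := (h z (Fin.last n)).mp (by rw [h1, h2, hcontra, hlast])
      rw [h1, h2] at this
      exact hZ (this ▸ hz)
    · intro a ha b hb hab
      have h1 := eZ_fix n Z (Finset.mem_insert_of_mem ha)
      have h2 := eZ_fix n Z (Finset.mem_insert_of_mem hb)
      have := (h a b).mp (by rw [h1, h2]; exact hab)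
      rwa [h1, h2] at this
  · rintro ⟨h1, h2⟩ x y
    refine ⟨fun hfe => ?_, fun he => by rw [he]⟩
    rcases Finset.mem_insert.mp (eZ_mem n Z x) with hx | hx <;>
      rcases Finset.mem_insert.mp (eZ_mem n Z y) with hy | hy
    · rw [hx, hy]
    · exact absurd (by rw [← hfe, hx, hlast]) (h1 _ hy)
    · exact absurd (by rw [hfe, hy, hlast]) (h1 _ hx)
    · exact h2 hx hy hfe
end

section
/- The Catalan monoid CT_{n+1} satisfies the generalized right ample condition: for all f, g, h in CT_{n+1}, if h = f∘g∘e for some idempotent e (i.e., h ⊴_l fg), then (f∘(g∘h*)+)* = (g∘h*)+. -/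
/-- The Catalan monoid satisfies the generalized right ample condition:
if `h ⊴_l fg` (i.e. `h = f ∘ g ∘ e` for an idempotent `e`), then
`(f ∘ (g ∘ h^*)^+)^* = (g ∘ h^*)^+`.  Here `hs = h^*` is the idempotent with
the same kernel as `h`, `p = (g ∘ hs)^+` is the idempotent with the same image
as `g ∘ hs`, and the conclusion says any idempotent with the same kernel as
`f ∘ p` equals `p`. -/
theorem stmt_16 (n : ℕ) (f g h : Fin (n + 1) → Fin (n + 1))
    (hf : IsCT f) (hg : IsCT g) (hh : IsCT h)
    (hle : ∃ e, IsCT e ∧ e ∘ e = e ∧ h = f ∘ g ∘ e)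
    (hs : Fin (n + 1) → Fin (n + 1)) (hhs : IsCT hs) (hs_idem : hs ∘ hs = hs)
    (hs_ker : ∀ x y, hs x = hs y ↔ h x = h y)
    (p : Fin (n + 1) → Fin (n + 1)) (hp : IsCT p) (hp_idem : p ∘ p = p)
    (hp_im : Set.range p = Set.range (g ∘ hs)) :
    ∀ q : Fin (n + 1) → Fin (n + 1), IsCT q → q ∘ q = q →
      (∀ x y, q x = q y ↔ (f ∘ p) x = (f ∘ p) y) → q = p := by
  obtain ⟨e, heCT, he_idem, hh_eq⟩ := hle
  intro q hq hq_idem hq_ker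
  -- h ∘ e = h
  have hHe : ∀ z, h (e z) = h z := by
    intro z
    rw [hh_eq]
    simp only [Function.comp_apply]
    rw [show e (e z) = e z from congrFun he_idem z]
  -- hs ∘ e = hs
  have hs_e : ∀ z, hs (e z) = hs z := fun z => (hs_ker _ _).mpr (hHe z)
  -- e ∘ hs = hs
  have e_hs : ∀ z, e (hs z) = hs z := by
    intro z
    have h1 : hs z ≤ e (hs z) := heCT.2 _
    have h2 : e (hs z) ≤ hs (e (hs z)) := hhs.2 _
    have h3 : hs (e (hs z)) = hs z :=
      (hs_e _).trans (congrFun hs_idem z)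
    exact le_antisymm (h2.trans_eq h3) h1
  -- f is injective on range p
  have finj : ∀ a b, a ∈ Set.range p → b ∈ Set.range p → f a = f b → a = b := by
    intro a b ha hb hab
    rw [hp_im] at ha hb
    obtain ⟨u, hu⟩ := ha
    obtain ⟨v, hv⟩ := hb
    have hfa : f a = h (hs u) := by
      rw [← hu, hh_eq]; simp only [Function.comp_apply]; rw [e_hs]
    have hfb : f b = h (hs v) := by
      rw [← hv, hh_eq]; simp only [Function.comp_apply]; rw [e_hs]
    have huv : hs (hs u) = hs (hs v) :=
      (hs_ker _ _).mpr (by rw [← hfa, ← hfb, hab])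
    rw [show hs (hs u) = hs u from congrFun hs_idem u,
      show hs (hs v) = hs v from congrFun hs_idem v] at huv
    rw [← hu, ← hv]
    simp only [Function.comp_apply]
    rw [huv]
  -- ker q = ker p
  have kqp : ∀ x y, q x = q y ↔ p x = p y := by
    intro x y
    rw [hq_ker]
    simp only [Function.comp_apply]
    constructor
    · intro hxy; exact finj _ _ ⟨x, rfl⟩ ⟨y, rfl⟩ hxy
    · intro hxy; rw [hxy]
  -- two increasing idempotents with the same kernel are equal
  funext x
  have h1 : p x ≤ q x := by
    have : q x = q (p x) := (kqp x (p x)).mpr (congrFun hp_idem x).symm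
    calc p x ≤ q (p x) := hq.2 _
      _ = q x := this.symm
  have h2 : q x ≤ p x := by
    have : p x = p (q x) := (kqp x (q x)).mp (congrFun hq_idem x).symm
    calc q x ≤ p (q x) := hp.2 _
      _ = p x := this.symm
  exact le_antisymm h2 h1
end

section
/- The Catalan monoid CT_{n+1} satisfies the generalized left ample condition: for all f, g, h in CT_{n+1}, if h = e∘f∘g for some idempotent e (i.e., h ⊴_r fg), then ((h+∘f)*∘g)+ = (h+∘f)*. -/
/-- An idempotent fixes every element of its range. -/
lemma idem_fix {m : ℕ} {e : Fin m → Fin m} (he : e ∘ e = e) :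
    ∀ y, y ∈ Set.range e → e y = y := by
  rintro _ ⟨x, rfl⟩
  have := congrFun he x
  simpa using this

/-- The Catalan monoid satisfies the generalized left ample condition:
if `h ⊴_r fg` (i.e. `h = e ∘ f ∘ g` for an idempotent `e`), then
`((h^+ ∘ f)^* ∘ g)^+ = (h^+ ∘ f)^*`.  Here `hp = h^+` is the idempotent with
the same image as `h`, `w = (hp ∘ f)^*` is the idempotent with the same kernel
as `hp ∘ f`, and the conclusion says any idempotent with the same image as
`w ∘ g` equals `w`. -/
theorem stmt_19 (n : ℕ) (f g h : Fin (n + 1) → Fin (n + 1))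
    (hf : IsCT f) (hg : IsCT g) (hh : IsCT h)
    (hle : ∃ e, IsCT e ∧ e ∘ e = e ∧ h = e ∘ f ∘ g)
    (hp : Fin (n + 1) → Fin (n + 1)) (hhp : IsCT hp) (hp_idem : hp ∘ hp = hp)
    (hp_im : Set.range hp = Set.range h)
    (w : Fin (n + 1) → Fin (n + 1)) (hw : IsCT w) (hw_idem : w ∘ w = w)
    (hw_ker : ∀ x y, w x = w y ↔ (hp ∘ f) x = (hp ∘ f) y) :
    ∀ q : Fin (n + 1) → Fin (n + 1), IsCT q → q ∘ q = q →
      Set.range q = Set.range (w ∘ g) → q = w := by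
  obtain ⟨e, he, he_idem, hhe⟩ := hle
  have hpfix := idem_fix hp_idem
  have efix := idem_fix he_idem
  -- every element of the range of h is fixed by e
  have hrange_e : ∀ y, y ∈ Set.range h → e y = y := by
    rintro _ ⟨x, rfl⟩
    apply efix
    exact ⟨f (g x), by rw [hhe]; rfl⟩
  -- key claim: for every y there is x with hp (f (g x)) = hp (f y)
  have key : ∀ y, ∃ x, hp (f (g x)) = hp (f y) := by
    intro y
    set c := hp (f y) with hc_def
    have hcfix : hp c = c := hpfix c ⟨f y, rfl⟩
    have hc_mem : c ∈ Set.range h := by rw [← hp_im]; exact ⟨f y, rfl⟩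
    obtain ⟨x, hx⟩ := hc_mem
    have hxc : e (f (g x)) = c := by
      have := hx; rw [hhe] at this; exact this
    have hce : e c = c := hrange_e c (by rw [← hx]; exact ⟨x, rfl⟩)
    have h2 : hp (f (g x)) ≤ c := by
      calc hp (f (g x)) ≤ hp (e (f (g x))) := hhp.1 (he.2 _)
        _ = hp c := by rw [hxc]
        _ = c := hcfix
    have h3 : e (hp (f (g x))) = hp (f (g x))  := by
      apply hrange_e
      rw [← hp_im]; exact ⟨f (g x), rfl⟩
    have h4 : c ≤ hp (f (g x)) := by
      calc c = e (f (g x)) := hxc.symm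
        _ ≤ e (hp (f (g x))) := he.1 (hhp.2 _)
        _ = hp (f (g x)) := h3
    exact ⟨x, le_antisymm h2 h4⟩
  intro q hq hq_idem hq_range
  -- range (w ∘ g) = range w
  have hrange : Set.range (w ∘ g) = Set.range w := by
    apply Set.Subset.antisymm
    · rintro _ ⟨x, rfl⟩; exact ⟨g x, rfl⟩
    · rintro _ ⟨y, rfl⟩
      obtain ⟨x, hx⟩ := key y
      exact ⟨x, (hw_ker (g x) y).2 (by simpa using hx)⟩
  rw [hrange] at hq_range
  -- two idempotents with the same range are equal
  have qfix := idem_fix hq_idem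
  have wfix := idem_fix hw_idem
  funext x
  have h1 : q x ≤ w x := by
    calc q x ≤ q (w x) := hq.1 (hw.2 x)
      _ = w x := qfix _ (by rw [hq_range]; exact ⟨x, rfl⟩)
  have h2 : w x ≤ q x := by
    calc w x ≤ w (q x) := hw.1 (hq.2 x)
      _ = q x := wfix _ (by rw [← hq_range]; exact ⟨x, rfl⟩)
  exact le_antisymm h1 h2
end
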